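/- Let d be a natural number, n = floor(d/2), ε = (-1)^d. Define M(i,k) = C(d-k+1, d-i+1) - C(k, d-i+1) for 0 ≤ i ≤ d, 0 ≤ k ≤ n. Define A_+(i,j) = C(j,i-j), A_-(i,j) = C(j+1,i-j) + C(j,i-j-1), G_+(j,k) = ((2k+1)/(2j+1)) * C(k+j, 2j), G_-(j,k) = C(k+j+1, 2j+1). Then M(i,k) = sum over j from 0 to n of A_ε(i,j) * G_ε(n-j, n-k), where A_ε means A_+ if d is even and A_- if d is odd, and similarly for G_ε. -/

import Mathlib

/-- Binomial coefficient `C(n,k)` extended by `0` when `k < 0` or `k > n`. -/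
def Cz (n k : ℤ) : ℤ := if 0 ≤ k ∧ k ≤ n then (n.toNat.choose k.toNat : ℤ) else 0

/-- `A₊(i,j) = C(j, i-j)`. -/
def Ap (i j : ℤ) : ℚ := (Cz j (i - j) : ℚ)

/-- `A₋(i,j) = C(j+1, i-j) + C(j, i-j-1)`. -/
def Am (i j : ℤ) : ℚ := (Cz (j + 1) (i - j) : ℚ) + (Cz j (i - j - 1) : ℚ)

/-- `G₊(j,k) = ((2k+1)/(2j+1)) C(k+j, 2j)`. -/
def Gp (j k : ℤ) : ℚ := ((2 * k + 1) / (2 * j + 1) : ℚ) * (Cz (k + j) (2 * j) : ℚ)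

/-- `G₋(j,k) = C(k+j+1, 2j+1)`. -/
def Gm (j k : ℤ) : ℚ := (Cz (k + j + 1) (2 * j + 1) : ℚ)


/-!
With `y = x(1+x)` one has `(1+x) - x = 1`, so the differences `(1+x)^N - x^N` obey the Lucas
recurrence `E(N+2) = (1+2x) E(N+1) - y E(N)`, hence `E(N+4) = (1+2y) E(N+2) - y² E(N)`. The
columns of `G₊` and `G₋` satisfy Pascal-type recurrences which say exactly that their row
generating polynomials `∑ G(m-p,m) yᵖ` obey the same recurrence; comparing initial values gives
`(1+x)^(2m+1) - x^(2m+1) = ∑ G₊(m-p,m) yᵖ` and `(1+x)^(2m+2) - x^(2m+2) = (1+2x) ∑ G₋(m-p,m) yᵖ`.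
On the other hand `M(i,k)` is the coefficient of `xⁱ` in `yᵏ ((1+x)^(d+1-2k) - x^(d+1-2k))`, while
`A₊(i,j)` and `A₋(i,j)` are the coefficients of `xⁱ` in `yʲ` and `(1+2x) yʲ`.
-/

open Finset Polynomial

lemma Cz_natCast (n k : ℕ) : Cz n k = n.choose k := by
  unfold Cz
  split_ifs with h
  · simp
  · rw [Nat.choose_eq_zero_of_lt (by omega), Nat.cast_zero]

lemma Cz_of_neg {n k : ℤ} (hk : k < 0) : Cz n k = 0 :=
  if_neg fun h => by omega

lemma Cz_of_lt {n k : ℤ} (hnk : n < k) : Cz n k = 0 :=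
  if_neg fun h => by omega

lemma Cz_symm {n : ℤ} (hn : 0 ≤ n) (k : ℤ) : Cz n (n - k) = Cz n k := by
  rcases lt_or_ge k 0 with hk | hk
  · rw [Cz_of_neg hk, Cz_of_lt (by omega)]
  rcases lt_or_ge n k with hnk | hnk
  · rw [Cz_of_neg (by omega), Cz_of_lt hnk]
  lift n to ℕ using hn
  lift k to ℕ using hk
  rw [← Nat.cast_sub (by omega), Cz_natCast, Cz_natCast, Nat.choose_symm (by omega)]

lemma Cz_succ {n : ℤ} (hn : 0 ≤ n) (k : ℤ) : Cz (n + 1) k = Cz n k + Cz n (k - 1) := by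
  lift n to ℕ using hn
  rcases lt_trichotomy k 0 with hk | rfl | hk
  · rw [Cz_of_neg hk, Cz_of_neg hk, Cz_of_neg (by omega), add_zero]
  · rw [Cz_of_neg (show (0 : ℤ) - 1 < 0 by norm_num), ← Nat.cast_succ, ← Nat.cast_zero,
      Cz_natCast, Cz_natCast]
    simp
  · obtain ⟨k, rfl⟩ : ∃ k' : ℕ, k = k' + 1 := ⟨(k - 1).toNat, by omega⟩
    rw [add_sub_cancel_right, ← Nat.cast_succ, ← Nat.cast_succ, Cz_natCast, Cz_natCast,
      Cz_natCast, Nat.choose_succ_succ, Nat.cast_add, add_comm]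

lemma coeff_X_pow_mul_one_add_X_pow {R : Type*} [Ring R] (a b i : ℕ) :
    ((X ^ a * (1 + X) ^ b : R[X]).coeff i) = Cz b (i - a) := by
  rw [coeff_X_pow_mul', coeff_one_add_X_pow]
  split_ifs with h
  · rw [← Nat.cast_sub h, Cz_natCast, Int.cast_natCast]
  · rw [Cz_of_neg (by omega), Int.cast_zero]

lemma Gp_eq_Cz_add_two_mul_Cz (j k : ℤ) :
    Gp j k = Cz (k + j) (2 * j) + 2 * Cz (k + j) (2 * j + 1) := by
  rcases lt_or_ge j 0 with hj | hj
  · simp [Gp, Cz_of_neg (by omega : 2 * j < 0), Cz_of_neg (by omega : 2 * j + 1 < 0)]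
  rcases lt_or_ge k j with hkj | hkj
  · simp [Gp, Cz_of_lt (by omega : k + j < 2 * j), Cz_of_lt (by omega : k + j < 2 * j + 1)]
  lift j to ℕ using hj
  obtain ⟨r, rfl⟩ : ∃ r : ℕ, k = j + r := ⟨(k - j).toNat, by omega⟩
  have hrec := Nat.choose_succ_right_eq (j + r + j) (2 * j)
  rw [show j + r + j - 2 * j = r by omega] at hrec
  have h0 : Cz (j + r + j : ℕ) (2 * j : ℕ) = ((j + r + j).choose (2 * j) : ℤ) := Cz_natCast ..
  have h1 : Cz (j + r + j : ℕ) (2 * j + 1 : ℕ) = ((j + r + j).choose (2 * j + 1) : ℤ) :=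
    Cz_natCast ..
  push_cast at h0 h1
  rw [Gp, h0, h1, div_mul_eq_mul_div, div_eq_iff (by positivity)]
  push_cast
  have hrec' : ((j + r + j).choose (2 * j + 1) : ℚ) * (2 * j + 1)
      = (j + r + j).choose (2 * j) * r := by
    exact_mod_cast hrec
  linear_combination (-2 : ℚ) * hrec'

lemma Gp_of_neg {j : ℤ} (k : ℤ) (hj : j < 0) : Gp j k = 0 := by
  simp [Gp_eq_Cz_add_two_mul_Cz, Cz_of_neg (show 2 * j < 0 by omega),
    Cz_of_neg (show 2 * j + 1 < 0 by omega)]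

lemma Gp_of_lt {j k : ℤ} (hkj : k < j) : Gp j k = 0 := by
  simp [Gp_eq_Cz_add_two_mul_Cz, Cz_of_lt (show k + j < 2 * j by omega),
    Cz_of_lt (show k + j < 2 * j + 1 by omega)]

lemma Gm_of_neg {j : ℤ} (k : ℤ) (hj : j < 0) : Gm j k = 0 := by
  simp [Gm, Cz_of_neg (show 2 * j + 1 < 0 by omega)]

lemma Gm_of_lt {j k : ℤ} (hkj : k < j) : Gm j k = 0 := by
  simp [Gm, Cz_of_lt (show k + j + 1 < 2 * j + 1 by omega)]

lemma Gp_add_two (j : ℤ) {m : ℤ} (hm : 0 ≤ m) :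
    Gp j (m + 2) = Gp (j - 1) (m + 1) + 2 * Gp j (m + 1) - Gp j m := by
  rcases lt_or_ge j 0 with hj | hj
  · simp [Gp_of_neg _ hj, Gp_of_neg _ (show j - 1 < 0 by omega)]
  have h₁ := Cz_succ (show 0 ≤ m + j + 1 by omega) (2 * j)
  have h₂ := Cz_succ (show 0 ≤ m + j + 1 by omega) (2 * j + 1)
  have h₃ := Cz_succ (show 0 ≤ m + j by omega) (2 * j)
  have h₄ := Cz_succ (show 0 ≤ m + j by omega) (2 * j + 1)
  have h₅ := Cz_succ (show 0 ≤ m + j by omega) (2 * j - 1)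
  simp only [Gp_eq_Cz_add_two_mul_Cz]
  qify at h₁ h₂ h₃ h₄ h₅
  ring_nf at h₁ h₂ h₃ h₄ h₅ ⊢
  linarith

lemma Gm_add_two (j : ℤ) {m : ℤ} (hm : 0 ≤ m) :
    Gm j (m + 2) = Gm (j - 1) (m + 1) + 2 * Gm j (m + 1) - Gm j m := by
  rcases lt_or_ge j 0 with hj | hj
  · simp [Gm_of_neg _ hj, Gm_of_neg _ (show j - 1 < 0 by omega)]
  have h₁ := Cz_succ (show 0 ≤ m + j + 2 by omega) (2 * j + 1)
  have h₂ := Cz_succ (show 0 ≤ m + j + 1 by omega) (2 * j + 1)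
  have h₃ := Cz_succ (show 0 ≤ m + j + 1 by omega) (2 * j)
  simp only [Gm]
  qify at h₁ h₂ h₃
  ring_nf at h₁ h₂ h₃ ⊢
  linarith

/-- The conditions under which the row polynomials `S m = rowPoly G y m` satisfy
`S (m+2) = (1+2y) S (m+1) - y² S m`. -/
structure IsGArray (G : ℤ → ℤ → ℚ) : Prop where
  of_neg : ∀ {j} k, j < 0 → G j k = 0
  of_lt : ∀ {j k}, k < j → G j k = 0
  add_two : ∀ j {m}, 0 ≤ m → G j (m + 2) = G (j - 1) (m + 1) + 2 * G j (m + 1) - G j m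

lemma isGArray_Gp : IsGArray Gp := ⟨Gp_of_neg, Gp_of_lt, Gp_add_two⟩

lemma isGArray_Gm : IsGArray Gm := ⟨Gm_of_neg, Gm_of_lt, Gm_add_two⟩

section RowPoly

variable {R : Type*} [CommRing R] [Algebra ℚ R]

def rowPoly (G : ℤ → ℤ → ℚ) (y : R) (m : ℕ) : R :=
  ∑ p ∈ range (m + 1), G (m - p) m • y ^ p

lemma rowPoly_zero (G : ℤ → ℤ → ℚ) (y : R) : rowPoly G y 0 = G 0 0 • 1 := by
  simp [rowPoly]

lemma rowPoly_one (G : ℤ → ℤ → ℚ) (y : R) : rowPoly G y 1 = G 1 1 • 1 + G 0 1 • y := by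
  simp [rowPoly, sum_range_succ]

lemma IsGArray.rowPoly_add_two {G : ℤ → ℤ → ℚ} (hG : IsGArray G) (y : R) (m : ℕ) :
    rowPoly G y (m + 2) = (1 + 2 * y) * rowPoly G y (m + 1) - y ^ 2 * rowPoly G y m := by
  have h₁ : ∑ p ∈ range (m + 3), G ((m : ℤ) + 1 - p) (m + 1) • y ^ p = rowPoly G y (m + 1) := by
    rw [sum_range_succ, hG.of_neg _ (by omega), zero_smul, add_zero, rowPoly]
    push_cast; rfl
  have h₂ : ∑ p ∈ range (m + 3), G ((m : ℤ) + 2 - p) (m + 1) • y ^ p = y * rowPoly G y (m + 1) := by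
    rw [sum_range_succ', hG.of_lt (by omega), zero_smul, add_zero, rowPoly, mul_sum]
    refine sum_congr rfl fun p _ => ?_
    rw [pow_succ', mul_smul_comm]
    push_cast; ring_nf
  have h₃ : ∑ p ∈ range (m + 3), G ((m : ℤ) + 2 - p) m • y ^ p = y ^ 2 * rowPoly G y m := by
    rw [sum_range_succ', sum_range_succ', hG.of_lt (by omega), hG.of_lt (by omega), zero_smul,
      zero_smul, add_zero, add_zero, rowPoly, mul_sum]
    refine sum_congr rfl fun p _ => ?_
    rw [pow_add, mul_comm, mul_smul_comm]
    push_cast; ring_nf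
  calc rowPoly G y (m + 2)
      = ∑ p ∈ range (m + 3), (G ((m : ℤ) + 1 - p) (m + 1) • y ^ p
          + (2 : ℚ) • G ((m : ℤ) + 2 - p) (m + 1) • y ^ p - G ((m : ℤ) + 2 - p) m • y ^ p) := by
        refine sum_congr rfl fun p _ => ?_
        push_cast
        rw [hG.add_two _ (Nat.cast_nonneg m), show (m : ℤ) + 2 - p - 1 = m + 1 - p by ring]
        module
    _ = _ := by
        rw [sum_sub_distrib, sum_add_distrib, ← smul_sum, h₁, h₂, h₃, two_smul]
        ring

lemma rowPoly_Gp (x : R) (m : ℕ) :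
    rowPoly Gp (x * (1 + x)) m = (1 + x) ^ (2 * m + 1) - x ^ (2 * m + 1) := by
  induction m using Nat.twoStepInduction with
  | zero => simp [rowPoly_zero, Gp, Cz]
  | one =>
    rw [rowPoly_one, show Gp 1 1 = 1 by norm_num [Gp, Cz], show Gp 0 1 = 3 by norm_num [Gp, Cz]]
    simp only [one_smul, ofNat_smul_eq_nsmul, nsmul_eq_mul]
    ring
  | more m ih₀ ih₁ =>
    rw [isGArray_Gp.rowPoly_add_two, ih₀, ih₁]
    ring

lemma one_add_two_mul_mul_rowPoly_Gm (x : R) (m : ℕ) :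
    (1 + 2 * x) * rowPoly Gm (x * (1 + x)) m = (1 + x) ^ (2 * m + 2) - x ^ (2 * m + 2) := by
  induction m using Nat.twoStepInduction with
  | zero => simp [rowPoly_zero, Gm, Cz]; ring
  | one =>
    rw [rowPoly_one, show Gm 1 1 = 1 by norm_num [Gm, Cz], show Gm 0 1 = 2 by norm_num [Gm, Cz]]
    simp only [one_smul, ofNat_smul_eq_nsmul, nsmul_eq_mul]
    ring
  | more m ih₀ ih₁ =>
    rw [isGArray_Gm.rowPoly_add_two]
    linear_combination (1 + 2 * (x * (1 + x))) * ih₁ - (x * (1 + x)) ^ 2 * ih₀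

lemma IsGArray.sum_smul_pow_eq {G : ℤ → ℤ → ℚ} (hG : IsGArray G) (y : R) {n k : ℕ} (hk : k ≤ n) :
    ∑ j ∈ range (n + 1), G ((n : ℤ) - j) ((n : ℤ) - k) • y ^ j = y ^ k * rowPoly G y (n - k) := by
  obtain ⟨r, rfl⟩ := Nat.exists_eq_add_of_le hk
  rw [add_assoc, sum_range_add, sum_eq_zero fun j hj => by
    rw [hG.of_lt (by simp at hj; omega), zero_smul], zero_add, rowPoly, mul_sum,
    Nat.add_sub_cancel_left]
  refine sum_congr rfl fun p _ => ?_
  rw [pow_add, mul_smul_comm]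
  push_cast; ring_nf

end RowPoly

lemma Cz_sub_Cz_eq_coeff {R : Type*} [CommRing R] (d i k : ℕ) (hk : 2 * k ≤ d + 1) :
    (Cz ((d : ℤ) - k + 1) ((d : ℤ) - i + 1) : R) - Cz k ((d : ℤ) - i + 1)
      = ((X * (1 + X)) ^ k * ((1 + X) ^ (d + 1 - 2 * k) - X ^ (d + 1 - 2 * k)) : R[X]).coeff i := by
  have hpoly : ((X * (1 + X)) ^ k * ((1 + X) ^ (d + 1 - 2 * k) - X ^ (d + 1 - 2 * k)) : R[X])
      = X ^ k * (1 + X) ^ (d + 1 - k) - X ^ (d + 1 - k) * (1 + X) ^ k := by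
    rw [mul_pow, show d + 1 - k = d + 1 - 2 * k + k by omega]
    ring
  have h₁ : Cz ((d : ℤ) - k + 1) ((d : ℤ) - i + 1) = Cz (d + 1 - k : ℕ) ((i : ℤ) - k) := by
    rw [← Cz_symm (n := (d + 1 - k : ℕ)) (by omega)]
    congr 1 <;> omega
  have h₂ : Cz k ((d : ℤ) - i + 1) = Cz k ((i : ℤ) - (d + 1 - k : ℕ)) := by
    rw [← Cz_symm (n := k) (by omega)]
    congr 1; omega
  rw [hpoly, coeff_sub, coeff_X_pow_mul_one_add_X_pow, coeff_X_pow_mul_one_add_X_pow, h₁, h₂]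

lemma Ap_eq_coeff (i j : ℕ) : Ap i j = ((X * (1 + X)) ^ j : ℚ[X]).coeff i := by
  rw [mul_pow, coeff_X_pow_mul_one_add_X_pow, Ap]

lemma Am_eq_coeff (i j : ℕ) : Am i j = ((1 + 2 * X) * (X * (1 + X)) ^ j : ℚ[X]).coeff i := by
  rw [show ((1 + 2 * X) * (X * (1 + X)) ^ j : ℚ[X])
      = X ^ j * (1 + X) ^ (j + 1) + X ^ (j + 1) * (1 + X) ^ j by rw [mul_pow]; ring,
    coeff_add, coeff_X_pow_mul_one_add_X_pow, coeff_X_pow_mul_one_add_X_pow, Am]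
  push_cast; ring_nf

theorem decomposition_Mg_general (d : ℕ) (n : ℕ) (hn : n = d / 2) (i k : ℕ)
    (hk : k ≤ n) :
    ((Cz ((d : ℤ) - k + 1) ((d : ℤ) - i + 1) : ℚ) - (Cz (k : ℤ) ((d : ℤ) - i + 1) : ℚ))
      = ∑ j ∈ Finset.range (n + 1),
          if Even d then Ap i j * Gp ((n : ℤ) - j) ((n : ℤ) - k)
          else Am i j * Gm ((n : ℤ) - j) ((n : ℤ) - k) := by
  rw [Cz_sub_Cz_eq_coeff d i k (by omega)]
  rcases Nat.even_or_odd' d with ⟨n', rfl | rfl⟩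
  · have hdeg : 2 * n' + 1 - 2 * k = 2 * (n - k) + 1 := by omega
    rw [hdeg, ← rowPoly_Gp, ← isGArray_Gp.sum_smul_pow_eq _ hk, finsetSum_coeff]
    refine sum_congr rfl fun j _ => ?_
    rw [if_pos (even_two_mul n'), coeff_smul, smul_eq_mul, Ap_eq_coeff, mul_comm]
  · have hdeg : 2 * n' + 1 + 1 - 2 * k = 2 * (n - k) + 2 := by omega
    rw [hdeg, ← one_add_two_mul_mul_rowPoly_Gm, mul_left_comm,
      ← isGArray_Gm.sum_smul_pow_eq _ hk, mul_sum, finsetSum_coeff]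
    refine sum_congr rfl fun j _ => ?_
    rw [if_neg (Nat.not_even_two_mul_add_one n'), mul_smul_comm, coeff_smul, smul_eq_mul,
      Am_eq_coeff, mul_comm]

theorem decomposition_Mg (d : ℕ) (n : ℕ) (hn : n = d / 2) (i k : ℕ)
    (hi : i ≤ d) (hk : k ≤ n) :
    ((Cz ((d : ℤ) - k + 1) ((d : ℤ) - i + 1) : ℚ) - (Cz (k : ℤ) ((d : ℤ) - i + 1) : ℚ))
      = ∑ j ∈ Finset.range (n + 1),
          if Even d then Ap i j * Gp ((n : ℤ) - j) ((n : ℤ) - k)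
          else Am i j * Gm ((n : ℤ) - j) ((n : ℤ) - k) :=
  decomposition_Mg_general d n hn i k hk
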